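/- arXiv:1304.6451 — 5 statements merged into one kernel-verified Lean document; each statement's English description precedes it below -/
import Mathlib

section
/- If P is a simple rank-3 matroid with an element e such that the deletion P \ e is isomorphic to the projective plane PG(2,q) over the finite field GF(q), then P has a U_{2,q^2+1}-minor (a rank-2 uniform minor on q^2+1 elements). -/
/-!
In `P / e` two points `a, b` of the plane `P \ e` are parallel exactly when `e` lies on the line
`ab` of `P`. All such lines coincide: two lines of `P` through `e`, each spanned by two points of
the plane, also meet in a point of the plane (any two lines of a projective plane meet), so they
share two points. Hence, keeping one of the `q + 1` points of that line and discarding the others,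
at least `q² + q + 1 - q = q² + 1` points of `P \ e` remain, pairwise non-parallel in the rank-2
matroid `P / e`: a `U_{2,q²+1}`-restriction of `P / e`.
-/

open Set Matroid

namespace Paper

variable {α : Type*}

/-- The deletion `M \ D`. -/
def del (M : Matroid α) (D : Set α) : Matroid α := M ↾ (M.E \ D)

/-- The contraction `M / C`. -/
def contr (M : Matroid α) (C : Set α) : Matroid α := (M✶ ↾ (M.E \ C))✶

/-- `N` is a minor of `M`. -/
def IsMinorOf (N M : Matroid α) : Prop := ∃ C D : Set α, N = del (contr M C) D

/-- Rank of a set: the maximum size of an independent subset. -/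
noncomputable def rk (M : Matroid α) (X : Set α) : ℕ :=
  sSup {n | ∃ I, M.Indep I ∧ I ⊆ X ∧ I.ncard = n}

/-- The rank of a matroid. -/
noncomputable def rank (M : Matroid α) : ℕ := rk M M.E

/-- The connectivity function `λ_M(X) = r(X) + r(E \ X) - r(M)`. -/
noncomputable def conn (M : Matroid α) (X : Set α) : ℤ :=
  (rk M X : ℤ) + (rk M (M.E \ X) : ℤ) - (rank M : ℤ)

/-- Local connectivity `⊓_M(S,T) = r(S) + r(T) - r(S ∪ T)`. -/
noncomputable def localConn (M : Matroid α) (S T : Set α) : ℤ :=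
  (rk M S : ℤ) + (rk M T : ℤ) - (rk M (S ∪ T) : ℤ)

/-- `κ_M(S,T) = min { λ_M(A) : S ⊆ A ⊆ E \ T }`. -/
noncomputable def kappa (M : Matroid α) (S T : Set α) : ℤ :=
  sInf {k : ℤ | ∃ A, S ⊆ A ∧ A ⊆ M.E \ T ∧ conn M A = k}

/-- Two sets are skew if their local connectivity is zero. -/
def SkewSets (M : Matroid α) (S T : Set α) : Prop := localConn M S T = 0

/-- A circuit is a minimal dependent set. -/
def Circuit (M : Matroid α) (C : Set α) : Prop := M.Dep C ∧ ∀ C' ⊂ C, ¬ M.Dep C'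

/-- A cocircuit is a circuit of the dual. -/
def Cocircuit (M : Matroid α) (C : Set α) : Prop := Circuit M✶ C

/-- A matroid is connected if any two elements lie in a common circuit. -/
def Connected (M : Matroid α) : Prop :=
  M.E.Nonempty ∧ ∀ e ∈ M.E, ∀ f ∈ M.E, e = f ∨ ∃ C, Circuit M C ∧ e ∈ C ∧ f ∈ C

/-- `M` is 3-connected: connected with no 2-separation. -/
def ThreeConnected (M : Matroid α) : Prop :=
  Connected M ∧ ∀ X ⊆ M.E, 2 ≤ X.ncard → 2 ≤ (M.E \ X).ncard → 2 ≤ conn M X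

/-- A matroid is simple if every set of at most two elements is independent. -/
def Simple (M : Matroid α) : Prop := ∀ X ⊆ M.E, X.ncard ≤ 2 → M.Indep X

/-- `φ` is an `F`-representation of `M`: independence equals linear independence. -/
def IsRepBy (M : Matroid α) (F : Type*) [Field F] {W : Type*} [AddCommGroup W]
    [Module F W] (φ : α → W) : Prop :=
  ∀ I ⊆ M.E, (M.Indep I ↔ LinearIndependent F (fun e : I => φ e.1))

/-- `M` is representable over the field `F`. -/
def Representable (M : Matroid α) (F : Type*) [Field F] : Prop :=
  ∃ (n : ℕ) (φ : α → (Fin n → F)), IsRepBy M F φ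

/-- `M` is (isomorphic to) the uniform matroid `U_{r,k}`. -/
def IsUniform (M : Matroid α) (r k : ℕ) : Prop :=
  M.E.Finite ∧ M.E.ncard = k ∧ ∀ I ⊆ M.E, (M.Indep I ↔ I.ncard ≤ r)

/-- `M` has a `U_{r,k}`-minor. -/
def HasUniformMinor (M : Matroid α) (r k : ℕ) : Prop :=
  ∃ N, IsMinorOf N M ∧ IsUniform N r k

/-- `M` is isomorphic to the projective geometry `PG(n-1, |F|)`: it has an
`F`-representation by pairwise non-parallel nonzero vectors of `F^n` meeting
every one-dimensional subspace. -/
def IsProjGeom (M : Matroid α) (n : ℕ) (F : Type*) [Field F] : Prop :=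
  ∃ φ : α → (Fin n → F),
    IsRepBy M F φ ∧ (∀ e ∈ M.E, φ e ≠ 0) ∧
    (∀ e ∈ M.E, ∀ f ∈ M.E, e ≠ f → ∀ c : F, φ f ≠ c • φ e) ∧
    (∀ v : Fin n → F, v ≠ 0 → ∃ e ∈ M.E, ∃ c : F, v = c • φ e)

/-- `M` has a `PG(n-1, |F|)`-minor. -/
def HasProjGeomMinor (M : Matroid α) (n : ℕ) (F : Type*) [Field F] : Prop :=
  ∃ N, IsMinorOf N M ∧ IsProjGeom N n F

section Matroid

variable {M : Matroid α}

lemma Simple.indep_pair (h : Simple M) {x y : α} (hx : x ∈ M.E) (hy : y ∈ M.E) :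
    M.Indep {x, y} :=
  h _ (pair_subset hx hy) ((ncard_insert_le x {y}).trans (by simp))

lemma ncard_le_rank_of_indep (hfin : M.E.Finite) {I : Set α} (hI : M.Indep I) :
    I.ncard ≤ rank M :=
  le_csSup ⟨M.E.ncard, by rintro n ⟨J, -, hJE, rfl⟩; exact ncard_le_ncard hJE hfin⟩
    ⟨I, hI, hI.subset_ground, rfl⟩

lemma closure_eq_closure_of_subset_closure {I J : Set α} (hI : M.Indep I) (hJ : M.Indep J)
    (hJfin : J.Finite) (hIJ : I ⊆ M.closure J) (hcard : J.encard ≤ I.encard) :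
    M.closure I = M.closure J := by
  have hIfin : M.IsRkFinite I := (M.isRkFinite_of_finite hJfin).closure.subset hIJ
  rw [hIfin.closure_eq_closure_of_subset_of_eRk_ge_eRk hIJ
    (by rwa [eRk_closure_eq, hI.eRk_eq_encard, hJ.eRk_eq_encard]), closure_closure]

lemma hasUniformMinor_of_forall_indep_insert {r : ℕ} (hfin : M.E.Finite)
    (hrank : rank M ≤ r + 1) {e : α} {T : Set α} (hT : T ⊆ M.E \ {e})
    (hTI : ∀ I ⊆ T, I.ncard ≤ r → M.Indep (insert e I)) : HasUniformMinor M r T.ncard := by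
  have hTfin : T.Finite := hfin.subset (hT.trans sdiff_subset)
  have he : M.IsNonloop e := indep_singleton.1 (by simpa using hTI ∅ (empty_subset T) (by simp))
  refine ⟨del (contr M {e}) ((M.E \ {e}) \ T), ⟨{e}, _, rfl⟩, ?_⟩
  have hE : (del (contr M {e}) ((M.E \ {e}) \ T)).E = T := sdiff_sdiff_cancel_left hT
  refine ⟨by rw [hE]; exact hTfin, by rw [hE], fun I hIE => ?_⟩
  have hIT : I ⊆ T := hE ▸ hIE
  replace hIE : I ⊆ (contr M {e}).E \ ((M.E \ {e}) \ T) := hIE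
  have heI : e ∉ I := fun h => (hT (hIT h)).2 rfl
  change ((M ／ {e}) ↾ _).Indep I ↔ _
  rw [restrict_indep_iff, he.contractElem_indep_iff, and_iff_left hIE,
    and_iff_right heI]
  refine ⟨fun hI => ?_, hTI I hIT⟩
  have := ncard_le_rank_of_indep hfin hI
  rw [ncard_insert_of_notMem heI (hTfin.subset hIT)] at this
  omega

lemma Simple.indep_insert_of_ncard_le_two (hsimple : Simple M) {e : α} (he : e ∈ M.E)
    {T : Set α} (hT : T ⊆ M.E)
    (hpair : ∀ a ∈ T, ∀ b ∈ T, a ≠ b → M.Indep {e, a, b}) :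
    ∀ I ⊆ T, I.ncard ≤ 2 → M.Indep (insert e I) := by
  intro I hIT hI
  rcases hI.lt_or_eq with hlt | h2
  · refine hsimple _ (insert_subset he (hIT.trans hT)) ((ncard_insert_le e I).trans ?_)
    omega
  · obtain ⟨a, b, hab, rfl⟩ := ncard_eq_two.1 h2
    exact hpair a (hIT (mem_insert a _)) b (hIT (mem_insert_of_mem a rfl)) hab

end Matroid

lemma eq_sum_pow_of_mul_sub_one_eq {q k N : ℕ} (hq : 2 ≤ q) (h : N * (q - 1) = q ^ k - 1) :
    N = ∑ i ∈ Finset.range k, q ^ i := by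
  have hgeom := geom_sum_mul_add (q - 1) k
  rw [Nat.sub_add_cancel (by omega : 1 ≤ q)] at hgeom
  exact Nat.eq_of_mul_eq_mul_right (by omega : 0 < q - 1) (by omega)

/-- `IsProjGeom` with the coordinate space `Fin n → F` replaced by an arbitrary vector space. -/
structure IsProjRep (M : Matroid α) (F : Type*) [Field F] {V : Type*} [AddCommGroup V]
    [Module F V] (φ : α → V) : Prop where
  isRepBy : IsRepBy M F φ
  ne_zero : ∀ e ∈ M.E, φ e ≠ 0
  not_parallel : ∀ e ∈ M.E, ∀ f ∈ M.E, e ≠ f → ∀ c : F, φ f ≠ c • φ e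
  exists_smul_eq : ∀ v : V, v ≠ 0 → ∃ e ∈ M.E, ∃ c : F, v = c • φ e

lemma IsProjGeom.exists_isProjRep {M : Matroid α} {n : ℕ} {F : Type*} [Field F]
    (h : IsProjGeom M n F) : ∃ φ : α → (Fin n → F), IsProjRep M F φ :=
  let ⟨φ, h₁, h₂, h₃, h₄⟩ := h
  ⟨φ, h₁, h₂, h₃, h₄⟩

section Representation

open Module Submodule

variable {M : Matroid α} {F V : Type*} [Field F] [AddCommGroup V] [Module F V] {φ : α → V}
  {I J : Set α}

lemma IsRepBy.mem_closure_iff (h : IsRepBy M F φ) (hI : M.Indep I) {x : α} (hx : x ∈ M.E) :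
    x ∈ M.closure I ↔ φ x ∈ span F (φ '' I) := by
  by_cases hxI : x ∈ I
  · exact iff_of_true (M.mem_closure_of_mem hxI) (subset_span (mem_image_of_mem φ hxI))
  have hxIE : insert x I ⊆ M.E := insert_subset hx hI.subset_ground
  have hins : M.Indep (insert x I) ↔ LinearIndepOn F φ (insert x I) := h _ hxIE
  rw [hI.mem_closure_iff_of_notMem hxI, ← not_indep_iff hxIE, hins, linearIndepOn_insert hxI,
    and_iff_right (show LinearIndepOn F φ I from (h I hI.subset_ground).1 hI), not_not]

lemma IsRepBy.closure_eq (h : IsRepBy M F φ) (hI : M.Indep I) :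
    M.closure I = {x ∈ M.E | φ x ∈ span F (φ '' I)} := by
  ext x
  refine ⟨fun hx => ?_, fun hx => (h.mem_closure_iff hI hx.1).2 hx.2⟩
  have hxE : x ∈ M.E := M.closure_subset_ground I hx
  exact ⟨hxE, (h.mem_closure_iff hI hxE).1 hx⟩

/-- Every nonzero vector of `W` is, uniquely, a nonzero multiple of the vector of a point. -/
lemma IsProjRep.ncard_mul_eq (hφ : IsProjRep M F φ) (W : Submodule F V) :
    {x ∈ M.E | φ x ∈ W}.ncard * (Nat.card F - 1) = Nat.card W - 1 := by
  let f : {x ∈ M.E | φ x ∈ W} × Fˣ → ((W : Set V) \ {0} : Set V) := fun p =>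
    ⟨(p.2 : F) • φ p.1, smul_mem W _ p.1.2.2,
      smul_ne_zero p.2.ne_zero (hφ.ne_zero _ p.1.2.1)⟩
  have hf : Function.Bijective f := by
    refine ⟨?_, ?_⟩
    · rintro ⟨⟨a, ha⟩, c⟩ ⟨⟨b, hb⟩, d⟩ hcd
      have hcd : (c : F) • φ a = (d : F) • φ b := congrArg Subtype.val hcd
      obtain rfl : a = b := by
        by_contra hab
        refine hφ.not_parallel a ha.1 b hb.1 hab ((d : F)⁻¹ * c) ?_
        rw [mul_smul, hcd, inv_smul_smul₀ d.ne_zero]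
      rw [Units.ext (smul_left_injective F (hφ.ne_zero a ha.1) hcd)]
    · rintro ⟨w, hwW, hw0⟩
      obtain ⟨a, ha, c, rfl⟩ := hφ.exists_smul_eq w (by simpa using hw0)
      have hc : c ≠ 0 := by rintro rfl; simp at hw0
      exact ⟨(⟨a, ha, by simpa [hc] using smul_mem W c⁻¹ hwW⟩, Units.mk0 c hc), rfl⟩
  rw [← Nat.card_coe_set_eq, ← Nat.card_units, ← Nat.card_prod,
    Nat.card_congr (Equiv.ofBijective f hf), Nat.card_coe_set_eq,
    ncard_sdiff_singleton_of_mem (zero_mem W), ← Nat.card_coe_set_eq]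
  rfl

variable [FiniteDimensional F V]

lemma IsRepBy.finrank_span_image (h : IsRepBy M F φ) (hI : M.Indep I) :
    finrank F (span F (φ '' I)) = I.ncard := by
  have hli : LinearIndependent F (fun x : I => φ x) := (h I hI.subset_ground).1 hI
  have := hli.finite
  have := Fintype.ofFinite I
  rw [image_eq_range, finrank_span_eq_card hli, Fintype.card_eq_nat_card, Nat.card_coe_set_eq]

lemma IsProjRep.exists_mem_closure_inter (hφ : IsProjRep M F φ) (hI : M.Indep I)
    (hJ : M.Indep J) (hIJ : finrank F V < I.ncard + J.ncard) :
    (M.closure I ∩ M.closure J).Nonempty := by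
  have hne : span F (φ '' I) ⊓ span F (φ '' J) ≠ ⊥ := fun hbot => by
    have := finrank_add_finrank_le_of_disjoint (disjoint_iff.2 hbot)
    rw [hφ.isRepBy.finrank_span_image hI, hφ.isRepBy.finrank_span_image hJ] at this
    omega
  obtain ⟨v, hv, hv0⟩ := exists_mem_ne_zero_of_ne_bot hne
  obtain ⟨p, hp, c, rfl⟩ := hφ.exists_smul_eq v hv0
  have hc : c ≠ 0 := by rintro rfl; simp at hv0
  rw [hφ.isRepBy.closure_eq hI, hφ.isRepBy.closure_eq hJ]
  exact ⟨p, ⟨hp, by simpa [hc] using smul_mem _ c⁻¹ hv.1⟩,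
    ⟨hp, by simpa [hc] using smul_mem _ c⁻¹ hv.2⟩⟩

variable [Finite F]

lemma IsProjRep.ncard_ground (hφ : IsProjRep M F φ) :
    M.E.ncard = ∑ i ∈ Finset.range (finrank F V), Nat.card F ^ i := by
  refine eq_sum_pow_of_mul_sub_one_eq Finite.one_lt_card ?_
  simpa [← Module.natCard_eq_pow_finrank (K := F) (V := V)] using hφ.ncard_mul_eq ⊤

lemma IsProjRep.ncard_closure (hφ : IsProjRep M F φ) (hI : M.Indep I) :
    (M.closure I).ncard = ∑ i ∈ Finset.range I.ncard, Nat.card F ^ i := by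
  refine eq_sum_pow_of_mul_sub_one_eq Finite.one_lt_card ?_
  rw [hφ.isRepBy.closure_eq hI, hφ.ncard_mul_eq, Module.natCard_eq_pow_finrank (K := F),
    hφ.isRepBy.finrank_span_image hI]

end Representation

section SingleElementExtension

open Module

variable {P : Matroid α} {e : α} {F V : Type*} [Field F] [AddCommGroup V] [Module F V]
  [FiniteDimensional F V] {φ : α → V}

lemma closure_pair_eq_of_not_indep_insert (hsimple : Simple P) (he : e ∈ P.E)
    (hφ : IsProjRep (del P {e}) F φ) (hV : finrank F V ≤ 3) {a b c d : α}
    (hab : {a, b} ⊆ P.E \ {e}) (hcd : {c, d} ⊆ P.E \ {e}) (hab' : a ≠ b) (hcd' : c ≠ d)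
    (habe : ¬ P.Indep {e, a, b}) (hcde : ¬ P.Indep {e, c, d}) :
    P.closure {a, b} = P.closure {c, d} := by
  have hpair : ∀ {x y}, {x, y} ⊆ P.E \ {e} → P.Indep {x, y} := fun hxy =>
    hsimple.indep_pair (hxy (mem_insert _ _)).1 (hxy (mem_insert_of_mem _ rfl)).1
  obtain ⟨p, hpab, hpcd⟩ := hφ.exists_mem_closure_inter
    (restrict_indep_iff.2 ⟨hpair hab, hab⟩) (restrict_indep_iff.2 ⟨hpair hcd, hcd⟩)
    (by rw [ncard_pair hab', ncard_pair hcd']; omega)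
  rw [del, restrict_closure_eq P hab] at hpab
  rw [del, restrict_closure_eq P hcd] at hpcd
  have hep : e ≠ p := fun h => hpab.2.2 h.symm
  have hline : ∀ {x y}, {x, y} ⊆ P.E \ {e} → ¬ P.Indep {e, x, y} →
      p ∈ P.closure {x, y} → P.closure {e, p} = P.closure {x, y} := fun {x y} hxy hxye hp => by
    have hexy : e ∈ P.closure {x, y} :=
      (hpair hxy).mem_closure_iff'.2 ⟨he, fun h => (hxye h).elim⟩
    refine closure_eq_closure_of_subset_closure (hsimple.indep_pair he hpab.2.1) (hpair hxy)
      (toFinite _) (pair_subset hexy hp) ?_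
    rw [encard_pair hep]
    exact (encard_insert_le _ _).trans (by norm_num)
  rw [← hline hab habe hpab.1, hline hcd hcde hpcd.1]

variable [Finite F]

lemma exists_forall_indep_insert_pair (hsimple : Simple P) (he : e ∈ P.E)
    (hφ : IsProjRep (del P {e}) F φ) (hV : finrank F V = 3) :
    ∃ T ⊆ P.E \ {e}, Nat.card F ^ 2 + 1 ≤ T.ncard ∧
      ∀ a ∈ T, ∀ b ∈ T, a ≠ b → P.Indep {e, a, b} := by
  set q := Nat.card F
  set S := P.E \ {e}
  have hS : S.ncard = q ^ 2 + q + 1 := by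
    rw [show S = (del P {e}).E from rfl, hφ.ncard_ground, hV]
    simp only [Finset.sum_range_succ, Finset.sum_range_zero]
    ring
  have hSfin : S.Finite := finite_of_ncard_ne_zero (by omega)
  by_cases hall : ∀ a ∈ S, ∀ b ∈ S, a ≠ b → P.Indep {e, a, b}
  · exact ⟨S, subset_rfl, by omega, hall⟩
  push Not at hall
  obtain ⟨f, hf, g, hg, hfg, hfge⟩ := hall
  set L := P.closure {f, g}
  have hL : (L ∩ S).ncard = q + 1 := by
    have hfgS : {f, g} ⊆ S := pair_subset hf hg
    have hQfg : (del P {e}).Indep {f, g} :=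
      restrict_indep_iff.2 ⟨hsimple.indep_pair hf.1 hg.1, hfgS⟩
    rw [← restrict_closure_eq P hfgS, ← del, hφ.ncard_closure hQfg, ncard_pair hfg]
    simp only [Finset.sum_range_succ, Finset.sum_range_zero]
    ring
  have hTS : insert f (S \ L) ⊆ S := insert_subset hf sdiff_subset
  refine ⟨insert f (S \ L), hTS, ?_, fun a ha b hb hab => ?_⟩
  · have hSL := le_ncard_sdiff (L ∩ S) S (hSfin.subset inter_subset_right)
    rw [sdiff_inter_self_eq_sdiff] at hSL
    have hfL : f ∉ S \ L := fun h =>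
      h.2 (P.mem_closure_of_mem (mem_insert f _) (pair_subset hf.1 hg.1))
    rw [ncard_insert_of_notMem hfL (hSfin.subset sdiff_subset)]
    omega
  by_contra habe
  have hcl := closure_pair_eq_of_not_indep_insert hsimple he hφ hV.le
    (pair_subset (hTS ha) (hTS hb)) (pair_subset hf hg) hab hfg habe hfge
  have hon : ∀ x ∈ insert f (S \ L), x ∈ P.closure {a, b} → x = f := fun x hx hxL =>
    hx.resolve_right fun h => h.2 (by rwa [hcl] at hxL)
  have habL : {a, b} ⊆ P.closure {a, b} := P.subset_closure _ (pair_subset (hTS ha).1 (hTS hb).1)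
  exact hab ((hon a ha (habL (mem_insert a _))).trans
    (hon b hb (habL (mem_insert_of_mem a rfl))).symm)

end SingleElementExtension

/-- If `P` is a simple rank-3 matroid with an element `e` such that `P \ e ≅ PG(2,q)`,
then `P` has a `U_{2,q²+1}`-minor. -/
theorem stmt0 {α : Type*} (q : ℕ) (F : Type*) [Field F] [Fintype F]
    (hq : Fintype.card F = q)
    (P : Matroid α) (hfin : P.E.Finite) (hsimple : Simple P) (hrank : rank P = 3)
    (e : α) (he : e ∈ P.E) (hPG : IsProjGeom (del P {e}) 3 F) :
    HasUniformMinor P 2 (q ^ 2 + 1) := by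
  obtain ⟨φ, hφ⟩ := hPG.exists_isProjRep
  obtain ⟨T, hTS, hTcard, hTpair⟩ :=
    exists_forall_indep_insert_pair hsimple he hφ (by simp)
  obtain ⟨T', hT'T, hT'card⟩ := exists_subset_card_eq hTcard
  rw [← hq, ← Nat.card_eq_fintype_card, ← hT'card]
  refine hasUniformMinor_of_forall_indep_insert hfin hrank.le (hT'T.trans hTS) ?_
  exact hsimple.indep_insert_of_ncard_le_two he (hT'T.trans (hTS.trans sdiff_subset))
    fun a ha b hb hab => hTpair a (hT'T ha) b (hT'T hb) hab

end Paper
end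

section
/- Tutte's Linking Theorem: if M is a matroid and S, T are disjoint subsets of E(M), then κ_M(S,T) = max{ ⊓_{M/Z}(S,T) : Z ⊆ E(M) \ (S ∪ T) }. -/
open Set Matroid

namespace Paper

variable {α : Type*}

/-! `⊓_{M/Z}(S,T) ≤ κ_M(S,T)` because `⊓_N(S,T) ≤ λ_N(A)` whenever `S ⊆ A ⊆ E(N) \ T`, and contracting
`Z` does not increase `λ(A)`. For the converse, induct on `|E \ (S ∪ T)|`: for `e ∉ S ∪ T`,
submodularity gives `λ_M(A ∩ B) + λ_M(A ∪ B ∪ e) ≤ λ_{M\e}(A) + λ_{M/e}(B) + 1`, so one of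
`κ_{M\e}(S,T)`, `κ_{M/e}(S,T)` is at least `κ_M(S,T)`, and a contraction set realising it in that
minor (together with `e` in the contraction case) works for `M`. -/

lemma contr_eq_contract (M : Matroid α) (C : Set α) : contr M C = M ／ C := rfl

lemma _root_.Matroid.eRk_contract_add_eRk (M : Matroid α) (C X : Set α) :
    (M ／ C).eRk X + M.eRk C = M.eRk (X ∪ C) := by
  obtain ⟨I, hI⟩ := M.exists_isBasis' C
  obtain ⟨K, hK, hIK⟩ := hI.indep.subset_isBasis'_of_subset (hI.subset.trans subset_union_right)
  have hKC : K ∩ C = I :=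
    (hI.eq_of_subset_indep (hK.indep.subset inter_subset_left)
      (subset_inter hIK hI.subset) inter_subset_right).symm
  have hbasis : (M ／ C).IsBasis' (K \ C) (X \ C) := by
    simpa using hK.contract_isBasis' hI (hK.indep.subset (union_subset sdiff_subset hIK))
  have hX : (M ／ C).eRk X = (M ／ C).eRk (X \ C) := by
    rw [← eRk_inter_ground, ← (M ／ C).eRk_inter_ground (X \ C), contract_ground]
    congr 1
    tauto_set
  rw [hX, hbasis.eRk_eq_encard, hI.eRk_eq_encard, hK.eRk_eq_encard, ← hKC,
    encard_sdiff_add_encard_inter]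

section Rank

variable (M : Matroid α) [M.RankFinite]

lemma cast_rk_eq_eRk (X : Set α) : (rk M X : ℕ∞) = M.eRk X := by
  obtain ⟨I, hI⟩ := M.exists_isBasis' X
  have hgreatest : IsGreatest {n | ∃ J, M.Indep J ∧ J ⊆ X ∧ J.ncard = n} I.ncard := by
    refine ⟨⟨I, hI.indep, hI.subset, rfl⟩, ?_⟩
    rintro n ⟨J, hJ, hJX, rfl⟩
    have := (hJ.encard_le_eRk_of_subset hJX).trans_eq hI.eRk_eq_encard
    rwa [← hJ.finite.cast_ncard_eq, ← hI.indep.finite.cast_ncard_eq, Nat.cast_le] at this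
  rw [rk, hgreatest.csSup_eq, hI.eRk_eq_encard, hI.indep.finite.cast_ncard_eq]

lemma rk_mono {X Y : Set α} (h : X ⊆ Y) : rk M X ≤ rk M Y := by
  exact_mod_cast (by simpa only [cast_rk_eq_eRk] using M.eRk_mono h :
    (rk M X : ℕ∞) ≤ rk M Y)

lemma rk_add_rk_le_rk_add_rk {X Y U V : Set α} (hU : U ⊆ X ∪ Y) (hV : V ⊆ X ∩ Y) :
    rk M U + rk M V ≤ rk M X + rk M Y := by
  have h := M.eRk_submod X Y
  simp only [← cast_rk_eq_eRk] at h
  have := rk_mono M hU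
  have := rk_mono M hV
  have : rk M (X ∩ Y) + rk M (X ∪ Y) ≤ rk M X + rk M Y := by exact_mod_cast h
  omega

lemma rk_singleton_le (e : α) : rk M {e} ≤ 1 := by
  exact_mod_cast (by simpa only [cast_rk_eq_eRk] using M.eRk_singleton_le e :
    (rk M {e} : ℕ∞) ≤ 1)

lemma rk_contract_add_rk (C X : Set α) :
    rk (M ／ C) X + rk M C = rk M (X ∪ C) := by
  exact_mod_cast (by simpa only [cast_rk_eq_eRk] using M.eRk_contract_add_eRk C X :
    (rk (M ／ C) X : ℕ∞) + rk M C = rk M (X ∪ C))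

lemma rk_delete {D X : Set α} (h : Disjoint X D) :
    rk (M ＼ D) X = rk M X := by
  have : (M ＼ D).eRk X = M.eRk X := by
    rw [delete_eq_restrict, restrict_eRk_eq', ← M.eRk_inter_ground X]
    congr 1
    tauto_set
  exact_mod_cast (by simpa only [cast_rk_eq_eRk] using this : (rk (M ＼ D) X : ℕ∞) = rk M X)

end Rank

section Connectivity

variable {M : Matroid α} [M.RankFinite] {S T A Z : Set α}

variable (M A) in
lemma conn_nonneg : 0 ≤ conn M A := by
  have := rk_add_rk_le_rk_add_rk M (X := A) (Y := M.E \ A) (U := M.E) (V := ∅)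
    (by tauto_set) (empty_subset _)
  simp only [conn, rank]
  omega

variable (M S T) in
lemma kappa_bddBelow :
    BddBelow {k : ℤ | ∃ A, S ⊆ A ∧ A ⊆ M.E \ T ∧ conn M A = k} :=
  ⟨0, by rintro k ⟨A, -, -, rfl⟩; exact conn_nonneg M A⟩

lemma kappa_le_conn (hSA : S ⊆ A) (hAT : A ⊆ M.E \ T) : kappa M S T ≤ conn M A :=
  csInf_le (kappa_bddBelow M S T) ⟨A, hSA, hAT, rfl⟩

lemma exists_conn_eq_kappa (hS : S ⊆ M.E) (hST : Disjoint S T) :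
    ∃ A, S ⊆ A ∧ A ⊆ M.E \ T ∧ conn M A = kappa M S T := by
  have hne : {k : ℤ | ∃ A, S ⊆ A ∧ A ⊆ M.E \ T ∧ conn M A = k}.Nonempty :=
    ⟨conn M S, S, Subset.rfl, subset_sdiff.2 ⟨hS, hST⟩, rfl⟩
  exact Int.csInf_mem hne (kappa_bddBelow M S T)

lemma localConn_le_conn (hT : T ⊆ M.E) (hSA : S ⊆ A) (hAT : Disjoint A T) :
    localConn M S T ≤ conn M A := by
  have h₁ := rk_add_rk_le_rk_add_rk M (X := A) (Y := S ∪ T) (U := A ∪ T) (V := S)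
    (by tauto_set) (by tauto_set)
  have h₂ := rk_add_rk_le_rk_add_rk M (X := M.E \ A) (Y := A ∪ T) (U := M.E) (V := T)
    (by tauto_set) (by tauto_set)
  simp only [localConn, conn, rank]
  omega

lemma localConn_delete {D : Set α} (hS : Disjoint S D) (hT : Disjoint T D) :
    localConn (M ＼ D) S T = localConn M S T := by
  simp only [localConn, rk_delete M hS, rk_delete M hT, rk_delete M (hS.union_left hT)]

lemma conn_contract_sdiff_le (hZ : Z ⊆ M.E) : conn (M ／ Z) (A \ Z) ≤ conn M A := by
  have h₁ : rk (M ／ Z) (A \ Z) + rk M Z = rk M (A ∪ Z) := by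
    rw [rk_contract_add_rk, sdiff_union_self]
  have h₂ : rk (M ／ Z) ((M.E \ Z) \ (A \ Z)) + rk M Z = rk M ((M.E \ A) ∪ Z) := by
    rw [rk_contract_add_rk]
    congr 1
    tauto_set
  have h₃ : rk (M ／ Z) (M.E \ Z) + rk M Z = rk M M.E := by
    rw [rk_contract_add_rk, sdiff_union_of_subset hZ]
  have s₁ := rk_add_rk_le_rk_add_rk M (X := A) (Y := Z) (U := A ∪ Z) (V := A ∩ Z)
    Subset.rfl Subset.rfl
  have s₂ := rk_add_rk_le_rk_add_rk M (X := M.E \ A) (Y := Z) (U := (M.E \ A) ∪ Z)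
    (V := (M.E \ A) ∩ Z) Subset.rfl Subset.rfl
  have s₃ := rk_add_rk_le_rk_add_rk M (X := A ∩ Z) (Y := (M.E \ A) ∩ Z) (U := Z) (V := ∅)
    (by tauto_set) (empty_subset _)
  simp only [conn, rank, contract_ground]
  omega

end Connectivity

section Linking

variable {M : Matroid α} [M.RankFinite] {S T A B Z : Set α} {e : α}

lemma conn_inter_add_conn_union_singleton_le (he : e ∈ M.E) (heA : e ∉ A) (heB : e ∉ B) :
    conn M (A ∩ B) + conn M (A ∪ B ∪ {e}) ≤ conn (M ＼ {e}) A + conn (M ／ {e}) B + 1 := by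
  have hAe : Disjoint A {e} := disjoint_singleton_right.2 heA
  have hBe : Disjoint B {e} := disjoint_singleton_right.2 heB
  have heE : {e} ⊆ M.E := singleton_subset_iff.2 he
  have hA : rk (M ＼ {e}) A = rk M A := rk_delete M hAe
  have hAc : rk (M ＼ {e}) ((M.E \ {e}) \ A) = rk M ((M.E \ {e}) \ A) :=
    rk_delete M (by tauto_set)
  have hE : rk (M ＼ {e}) (M.E \ {e}) = rk M (M.E \ {e}) := rk_delete M (by tauto_set)
  have hB : rk (M ／ {e}) B + rk M {e} = rk M (B ∪ {e}) := rk_contract_add_rk M {e} B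
  have hBc : rk (M ／ {e}) ((M.E \ {e}) \ B) + rk M {e} = rk M (M.E \ B) := by
    rw [rk_contract_add_rk]
    congr 1
    tauto_set
  have hE' : rk (M ／ {e}) (M.E \ {e}) + rk M {e} = rk M M.E := by
    rw [rk_contract_add_rk, sdiff_union_of_subset heE]
  have s₁ := rk_add_rk_le_rk_add_rk M (X := A) (Y := B ∪ {e})
    (U := A ∪ B ∪ {e}) (V := A ∩ B) (by tauto_set) (by tauto_set)
  have s₂ := rk_add_rk_le_rk_add_rk M (X := (M.E \ {e}) \ A) (Y := M.E \ B)
    (U := M.E \ (A ∩ B)) (V := M.E \ (A ∪ B ∪ {e})) (by tauto_set) (by tauto_set)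
  have hmono := rk_mono M (sdiff_subset : M.E \ {e} ⊆ M.E)
  have hloop := rk_singleton_le M e
  simp only [conn, rank, delete_ground, contract_ground, hA, hAc, hE]
  omega

lemma kappa_le_kappa_delete_or_kappa_contract (hS : S ⊆ M.E) (hST : Disjoint S T)
    (he : e ∈ M.E \ (S ∪ T)) :
    kappa M S T ≤ kappa (M ＼ {e}) S T ∨ kappa M S T ≤ kappa (M ／ {e}) S T := by
  have he' : {e} ⊆ M.E \ (S ∪ T) := singleton_subset_iff.2 he
  have hSe : S ⊆ M.E \ {e} := by tauto_set
  obtain ⟨A, hSA, hAT, hA⟩ := exists_conn_eq_kappa (M := M ＼ {e}) hSe hST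
  obtain ⟨B, hSB, hBT, hB⟩ := exists_conn_eq_kappa (M := M ／ {e}) hSe hST
  rw [delete_ground] at hAT
  rw [contract_ground] at hBT
  have hinter := kappa_le_conn (M := M) (S := S) (T := T) (A := A ∩ B) (by tauto_set)
    (by tauto_set)
  have hET : (M.E \ {e}) \ T ⊆ M.E \ T := sdiff_subset_sdiff_left sdiff_subset
  have hunion := kappa_le_conn (M := M) (T := T) (A := A ∪ B ∪ {e})
    (hSA.trans (subset_union_left.trans subset_union_left))
    (union_subset (union_subset (hAT.trans hET) (hBT.trans hET))
      (he'.trans (sdiff_subset_sdiff_right subset_union_right)))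
  have hsum := conn_inter_add_conn_union_singleton_le he.1 (fun h ↦ (hAT h).1.2 rfl)
    (fun h ↦ (hBT h).1.2 rfl)
  omega

lemma kappa_le_localConn_of_ground_subset (hS : S ⊆ M.E) (hT : T ⊆ M.E) (hST : Disjoint S T)
    (hE : M.E ⊆ S ∪ T) : kappa M S T ≤ localConn M S T := by
  have hSc : M.E \ S = T := by tauto_set
  have hE' : M.E = S ∪ T := hE.antisymm (union_subset hS hT)
  calc kappa M S T ≤ conn M S := kappa_le_conn Subset.rfl (subset_sdiff.2 ⟨hS, hST⟩)
    _ = localConn M S T := by simp only [conn, rank, localConn, hSc, ← hE']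

lemma localConn_contract_le_kappa (hS : S ⊆ M.E) (hT : T ⊆ M.E) (hST : Disjoint S T)
    (hZ : Z ⊆ M.E \ (S ∪ T)) : localConn (M ／ Z) S T ≤ kappa M S T := by
  obtain ⟨A, hSA, hAT, hA⟩ := exists_conn_eq_kappa hS hST
  calc localConn (M ／ Z) S T ≤ conn (M ／ Z) (A \ Z) :=
        localConn_le_conn (by rw [contract_ground]; tauto_set) (by tauto_set) (by tauto_set)
    _ ≤ conn M A := conn_contract_sdiff_le (hZ.trans sdiff_subset)
    _ = kappa M S T := hA

lemma exists_kappa_le_localConn_contract (hfin : (M.E \ (S ∪ T)).Finite) (hS : S ⊆ M.E)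
    (hT : T ⊆ M.E) (hST : Disjoint S T) :
    ∃ Z ⊆ M.E \ (S ∪ T), kappa M S T ≤ localConn (M ／ Z) S T := by
  obtain ⟨X, hX⟩ : ∃ X, M.E \ (S ∪ T) = X := ⟨_, rfl⟩
  rw [hX] at hfin ⊢
  induction X, hfin using Set.Finite.induction_on generalizing M with
  | empty =>
    refine ⟨∅, Subset.rfl, ?_⟩
    simpa using kappa_le_localConn_of_ground_subset hS hT hST (sdiff_eq_empty.1 hX)
  | @insert e X heX _ ih =>
    have he : e ∈ M.E \ (S ∪ T) := hX ▸ mem_insert e X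
    have heS : e ∉ S := fun h ↦ he.2 (Or.inl h)
    have heT : e ∉ T := fun h ↦ he.2 (Or.inr h)
    have hSe : S ⊆ M.E \ {e} := subset_sdiff_singleton hS heS
    have hTe : T ⊆ M.E \ {e} := subset_sdiff_singleton hT heT
    have hminor : (M.E \ {e}) \ (S ∪ T) = X := by
      rw [sdiff_sdiff_comm, hX, insert_sdiff_of_mem _ (mem_singleton e),
        sdiff_singleton_eq_self heX]
    rcases kappa_le_kappa_delete_or_kappa_contract hS hST he with hdel | hcon
    · obtain ⟨Z, hZX, hZ⟩ := ih (M := M ＼ {e}) hSe hTe hminor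
      refine ⟨Z, hZX.trans (subset_insert e X), hdel.trans (hZ.trans_eq ?_)⟩
      rw [← contract_delete_comm _ (disjoint_singleton_right.2 fun h ↦ heX (hZX h)),
        localConn_delete (disjoint_singleton_right.2 heS) (disjoint_singleton_right.2 heT)]
    · obtain ⟨Z, hZX, hZ⟩ := ih (M := M ／ {e}) hSe hTe hminor
      refine ⟨insert e Z, insert_subset_insert hZX, hcon.trans (hZ.trans_eq ?_)⟩
      rw [contract_contract, singleton_union]

end Linking

/-- Tutte's Linking Theorem: `κ_M(S,T) = max { ⊓_{M/Z}(S,T) : Z ⊆ E \ (S ∪ T) }`. -/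
theorem stmt5 {α : Type*} (M : Matroid α) (hfin : M.E.Finite)
    (S T : Set α) (hS : S ⊆ M.E) (hT : T ⊆ M.E) (hST : Disjoint S T) :
    (∀ Z ⊆ M.E \ (S ∪ T), localConn (contr M Z) S T ≤ kappa M S T) ∧
    (∃ Z ⊆ M.E \ (S ∪ T), localConn (contr M Z) S T = kappa M S T) := by
  have : M.Finite := ⟨hfin⟩
  simp only [contr_eq_contract]
  refine ⟨fun Z hZ ↦ localConn_contract_le_kappa hS hT hST hZ, ?_⟩
  obtain ⟨Z, hZ, hle⟩ := exists_kappa_le_localConn_contract hfin.sdiff hS hT hST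
  exact ⟨Z, hZ, (localConn_contract_le_kappa hS hT hST hZ).antisymm hle⟩

end Paper
end

section
/- Let F be a field extension of GF(q), let D₁ be a GF(q)-matrix with columns indexed by a set Y, and let α, α' be nonzero, non-parallel column vectors over GF(q) of the same height as D₁. If ω ∈ F \ GF(q), then the column vector α' − ω·α (over F) is not a scalar multiple of any vector with all entries in GF(q). -/
open Set Matroid

namespace Paper

variable {α : Type*}

/-- The `(i, j)` coordinate of the exterior product `a ∧ b`, i.e. a `2 × 2` minor of the
matrix with rows `a` and `b`. -/
def wedge {ι F : Type*} [Field F] (a b : ι → F) (i j : ι) : F := a i * b j - a j * b i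

section Wedge

variable {ι F : Type*} [Field F]

lemma wedge_sub_smul_right (a b : ι → F) (ω : F) (i j : ι) :
    wedge a (b - ω • a) i j = wedge a b i j := by
  simp only [wedge, Pi.sub_apply, Pi.smul_apply, smul_eq_mul]
  ring

lemma wedge_smul_right (a v : ι → F) (c : F) (i j : ι) :
    wedge a (c • v) i j = c * wedge a v i j := by
  simp only [wedge, Pi.smul_apply, smul_eq_mul]
  ring

lemma wedge_mem {K : Subfield F} {a b : ι → F} (ha : ∀ i, a i ∈ K) (hb : ∀ i, b i ∈ K)
    (i j : ι) : wedge a b i j ∈ K :=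
  K.sub_mem (K.mul_mem (ha i) (hb j)) (K.mul_mem (ha j) (hb i))

lemma exists_wedge_ne_zero {a b : ι → F} (ha : a ≠ 0) (hab : ∀ c : F, b ≠ c • a) :
    ∃ i j, a i ≠ 0 ∧ wedge a b i j ≠ 0 := by
  obtain ⟨i, hi⟩ : ∃ i, a i ≠ 0 := Function.ne_iff.mp ha
  by_contra! hwedge
  simp only [wedge] at hwedge
  refine hab (b i / a i) (funext fun j => ?_)
  rw [Pi.smul_apply, smul_eq_mul, div_mul_eq_mul_div, eq_div_iff hi]
  linear_combination hwedge i j hi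

end Wedge

lemma Subfield.mem_of_mul_mem {F : Type*} [Field F] {K : Subfield F} {c x : F} (hx : x ∈ K)
    (hx0 : x ≠ 0) (hcx : c * x ∈ K) : c ∈ K := by
  simpa [hx0] using K.mul_mem hcx (K.inv_mem hx)

/-- The minors `wedge a b i j` lie in `K` and are unchanged when `ω • a` is subtracted from `b`,
so a nonzero one pins down first the scalar `c` and then `ω` inside `K`. -/
theorem mem_of_sub_smul_eq_smul {ι F : Type*} [Field F] (K : Subfield F) {a b v : ι → F}
    (ha : ∀ i, a i ∈ K) (hb : ∀ i, b i ∈ K) (hv : ∀ i, v i ∈ K) (h0 : a ≠ 0)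
    (hpar : ∀ c : F, b ≠ c • a) {ω c : F} (h : b - ω • a = c • v) : ω ∈ K := by
  obtain ⟨i, j, hai, hij⟩ := exists_wedge_ne_zero h0 hpar
  have hwedge : c * wedge a v i j = wedge a b i j := by
    rw [← wedge_smul_right, ← h, wedge_sub_smul_right]
  have hc : c ∈ K :=
    Subfield.mem_of_mul_mem (wedge_mem ha hv i j) (right_ne_zero_of_mul (hwedge ▸ hij))
      (hwedge ▸ wedge_mem ha hb i j)
  have hωi : ω * a i = b i - c * v i := by
    have := congrFun h i
    simp only [Pi.sub_apply, Pi.smul_apply, smul_eq_mul] at this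
    linear_combination -this
  exact Subfield.mem_of_mul_mem (ha i) hai (hωi ▸ K.sub_mem (hb i) (K.mul_mem hc (hv i)))

theorem stmt8_general {F : Type*} [Field F] (K : Subfield F) {m : ℕ}
    (a a' : Fin m → F) (ha : ∀ i, a i ∈ K) (ha' : ∀ i, a' i ∈ K)
    (h0 : a ≠ 0) (hpar : ∀ c : F, a' ≠ c • a)
    (ω : F) (hω : ω ∉ K) :
    ¬ ∃ (c : F) (v : Fin m → F), (∀ i, v i ∈ K) ∧ a' - ω • a = c • v := by
  rintro ⟨c, v, hv, h⟩
  exact hω (mem_of_sub_smul_eq_smul K ha ha' hv h0 hpar h)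

/-- If `α, α'` are nonzero non-parallel vectors over the subfield `K = GF(q)` of `F`
and `ω ∈ F \ K`, then `α' - ω • α` is not a scalar multiple of any `K`-vector. -/
theorem stmt8 {F : Type*} [Field F] (K : Subfield F) [Fintype K] (q : ℕ)
    (hq : Fintype.card K = q) {m : ℕ}
    (a a' : Fin m → F) (ha : ∀ i, a i ∈ K) (ha' : ∀ i, a' i ∈ K)
    (h0 : a ≠ 0) (h0' : a' ≠ 0) (hpar : ∀ c : F, a' ≠ c • a)
    (ω : F) (hω : ω ∉ K) :
    ¬ ∃ (c : F) (v : Fin m → F), (∀ i, v i ∈ K) ∧ a' - ω • a = c • v :=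
  stmt8_general K a a' ha ha' h0 hpar ω hω

end Paper
end

section
/- Let F be a field extension of GF(q) and let A = [I | A'] be an F-matrix in standard form representing a matroid M with a distinguished row x, such that deleting row x yields a GF(q)-matrix, and such that for all columns f, g of A with A_{xf} ≠ 0 ≠ A_{xg} one has A_{xf}^{-1} A_{xg} ∈ GF(q). Then A can be transformed into a GF(q)-matrix by scaling the row x and scaling columns by nonzero elements of F. -/
open Set Matroid

namespace Paper

variable {α : Type*}

open Classical

/-- If `A` is a matrix in standard form over `F ⊇ K` whose rows other than `x` have
entries in `K`, and all nonzero entries of row `x` are `K`-multiples of one another,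
then `A` becomes a `K`-matrix after scaling row `x` and scaling columns. -/
theorem stmt16 {F : Type*} [Field F] (K : Subfield F) {β γ : Type*}
    (A : β → γ → F) (emb : β ↪ γ)
    (hstd : ∀ i i' : β, A i (emb i') = if i = i' then (1 : F) else 0)
    (x : β)
    (hK : ∀ i : β, i ≠ x → ∀ j : γ, A i j ∈ K)
    (hx : ∀ f g : γ, A x f ≠ 0 → A x g ≠ 0 → (A x f)⁻¹ * A x g ∈ K) :
    ∃ (r : F) (c : γ → F), r ≠ 0 ∧ (∀ j, c j ≠ 0) ∧
      ∀ i j, (if i = x then r else 1) * A i j * c j ∈ K := by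
  by_cases h0 : ∀ j : γ, A x j = 0
  · refine ⟨1, fun _ => 1, one_ne_zero, fun _ => one_ne_zero, fun i j => ?_⟩
    by_cases hix : i = x
    · simp [hix, h0 j]
    · simpa [hix] using hK i hix j
  · push_neg at h0
    obtain ⟨f0, hf0⟩ := h0
    refine ⟨(A x f0)⁻¹, fun _ => 1, inv_ne_zero hf0, fun _ => one_ne_zero,
      fun i j => ?_⟩
    by_cases hix : i = x
    · subst hix
      by_cases hj : A i j = 0
      · simp [hj]
      · simpa using hx f0 j hf0 hj
    · simpa [hix] using hK i hix j

end Paper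
end

section
/- Let q be a prime power and let N be a GF(q)-representable simple rank-4 matroid isomorphic to the affine geometry AG(3,q), represented by a GF(q)-matrix D₁ with an added element g represented over an extension field F by the column α' − ω·α, where α, α' are nonzero non-parallel GF(q)-columns and ω ∈ F \ GF(q). Then there is at most one line L of N such that g lies in the closure of L in the extended matroid; consequently there exists an element e of N with cl({e, g}) = {e, g}. -/
/-! Write `W = span_F {a, a'}`. A `K`-linear functional `f : F → K`, applied coordinatewise,
maps the `F`-span of vectors with entries in `K` into itself; taking `f 1 = 0 ≠ f ω` shows that
`a' - ω • a` lies in such a span only if `a` and `a'` do. So if `g` is spanned by two points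
`x, y` of `AG(3,q)`, then `span_F {φ x, φ y} = W`, and every line whose closure contains `g` is
the set of points represented in `W`. Three independent points of `AG(3,q)` cannot all lie in
`W`; for a point `e` outside `W`, a third element of `cl {e, g}` would, by exchange, put `g` in
the closure of a pair through `e`, forcing `φ e ∈ W`. -/

open Set Matroid

namespace Paper

variable {α : Type*}

/-- `M ≅ AG(n, |F|)` (rank `n+1`): `M` is represented by the vectors of `F^(n+1)` with first
coordinate `1`, bijectively. -/
def IsAffineGeom (M : Matroid α) (n : ℕ) (F : Type*) [Field F] : Prop :=
  ∃ φ : α → (Fin (n + 1) → F),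
    IsRepBy M F φ ∧ (∀ e ∈ M.E, φ e 0 = 1) ∧ Set.InjOn φ M.E ∧
    ∀ v : Fin (n + 1) → F, v 0 = 1 → ∃ e ∈ M.E, φ e = v

section FieldOfDefinition

open Submodule

variable {F : Type*} [Field F] {K : Subfield F} {ι : Type*}

lemma linearMap_mul_of_mem (f : F →ₗ[K] K) (c : F) {k : F} (hk : k ∈ K) :
    (f (c * k) : F) = f c * k := by
  have hsmul : c * k = (⟨k, hk⟩ : K) • c := mul_comm c k
  rw [hsmul, map_smul, smul_eq_mul, Subfield.coe_mul, mul_comm]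

lemma coordinatewise_mem_span (f : F →ₗ[K] K) {S : Set (ι → F)}
    (hS : ∀ s ∈ S, ∀ j, s j ∈ K) {x : ι → F} (hx : x ∈ span F S) :
    (fun j => (f (x j) : F)) ∈ span F S := by
  obtain ⟨n, c, s, rfl⟩ := mem_span_set'.1 hx
  have hmap : (fun j => (f ((∑ i, c i • (s i : ι → F)) j) : F))
      = ∑ i, (f (c i) : F) • (s i : ι → F) := by
    funext j
    simp only [Finset.sum_apply, Pi.smul_apply, smul_eq_mul, map_sum]
    push_cast
    exact Finset.sum_congr rfl fun i _ => linearMap_mul_of_mem f _ (hS _ (s i).2 j)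
  rw [hmap]
  exact sum_mem fun i _ => smul_mem _ _ (subset_span (s i).2)

lemma exists_linearMap_one_eq_zero {ω : F} (hω : ω ∉ K) :
    ∃ f : F →ₗ[K] K, f 1 = 0 ∧ f ω ≠ 0 := by
  have hω' : ω ∉ span K {(1 : F)} := by
    rintro hmem
    obtain ⟨k, rfl⟩ := mem_span_singleton.1 hmem
    exact hω (by simp [Subfield.smul_def])
  obtain ⟨f, hfω, hf⟩ := exists_dual_map_eq_bot_of_notMem hω' inferInstance
  exact ⟨f, (LinearMap.le_ker_iff_map.2 hf) (mem_span_singleton_self 1), hfω⟩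

lemma mem_span_of_sub_smul_mem_span {S : Set (ι → F)} (hS : ∀ s ∈ S, ∀ j, s j ∈ K)
    {a a' : ι → F} (ha : ∀ j, a j ∈ K) (ha' : ∀ j, a' j ∈ K) {ω : F} (hω : ω ∉ K)
    (h : a' - ω • a ∈ span F S) : a ∈ span F S ∧ a' ∈ span F S := by
  obtain ⟨f, hf1, hfω⟩ := exists_linearMap_one_eq_zero hω
  have hproj : (fun j => (f ((a' - ω • a) j) : F)) = -(f ω : F) • a := by
    funext j
    have h1 := linearMap_mul_of_mem f 1 (ha' j)
    have h2 := linearMap_mul_of_mem f ω (ha j)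
    simp only [one_mul, hf1, ZeroMemClass.coe_zero, zero_mul] at h1
    simp [h1, h2]
  have hneg := coordinatewise_mem_span f hS h
  rw [hproj, smul_mem_iff _ (neg_ne_zero.2 (by exact_mod_cast hfω))] at hneg
  refine ⟨hneg, ?_⟩
  rw [← sub_add_cancel a' (ω • a)]
  exact add_mem h (smul_mem _ ω hneg)

end FieldOfDefinition

section Pairs

open Submodule Module

variable {F : Type*} [Field F] {V : Type*} [AddCommGroup V] [Module F V]

lemma finrank_span_pair {u v : V} (h : LinearIndependent F ![u, v]) :
    finrank F (span F {u, v}) = 2 := by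
  have := finrank_span_eq_card h
  rwa [Matrix.range_cons, Matrix.range_cons, Matrix.range_empty, union_empty,
    singleton_union, Fintype.card_fin] at this

lemma span_pair_eq_of_subset {u v a a' : V} (hu : LinearIndependent F ![u, v])
    (ha : LinearIndependent F ![a, a']) (hau : a ∈ span F {u, v}) (hau' : a' ∈ span F {u, v}) :
    span F {a, a'} = span F {u, v} :=
  haveI : FiniteDimensional F (span F {u, v}) := .span_of_finite F (toFinite _)
  eq_of_le_of_finrank_eq (span_le.2 (insert_subset hau (singleton_subset_iff.2 hau')))
    (by rw [finrank_span_pair ha, finrank_span_pair hu])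

end Pairs

section Representations

open Submodule

variable {F : Type*} [Field F] {W : Type*} [AddCommGroup W] [Module F W]
  {M : Matroid α} {φ : α → W}

lemma IsRepBy.restrict (hrep : IsRepBy M F φ) {R : Set α} (hR : R ⊆ M.E) :
    IsRepBy (M ↾ R) F φ := fun I hI => by
  rw [restrict_indep_iff, and_iff_left (show I ⊆ R from hI), hrep I (hI.trans hR)]

lemma IsRepBy.closure_eq_of_indep (hrep : IsRepBy M F φ) {I : Set α} (hI : M.Indep I) :
    M.closure I = {x ∈ M.E | φ x ∈ span F (φ '' I)} := by
  ext x
  rw [hI.mem_closure_iff', mem_ofPred_eq, and_congr_right_iff]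
  intro hx
  by_cases hxI : x ∈ I
  · simp only [hxI, imp_true_iff, true_iff]
    exact subset_span (mem_image_of_mem φ hxI)
  · rw [hrep _ (insert_subset hx hI.subset_ground), ← LinearIndepOn, linearIndepOn_insert hxI]
    have hIli : LinearIndepOn F φ I := (hrep I hI.subset_ground).1 hI
    simp only [hIli, hxI, true_and, imp_false, not_not]

lemma IsRepBy.indep_pair_iff (hrep : IsRepBy M F φ) {x y : α} (hxy : x ≠ y) (hx : x ∈ M.E)
    (hy : y ∈ M.E) : M.Indep {x, y} ↔ LinearIndependent F ![φ x, φ y] := by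
  rw [hrep _ (pair_subset hx hy), ← LinearIndepOn, LinearIndepOn.pair_iff _ hxy,
    LinearIndependent.pair_iff]

end Representations

lemma exists_isBasis_ncard_eq_of_rk_eq {M : Matroid α} {X : Set α} {n : ℕ}
    (hn : n ≠ 0) (hX : X ⊆ M.E) (h : rk M X = n) : ∃ I, M.IsBasis I X ∧ I.ncard = n := by
  set S := {n | ∃ I, M.Indep I ∧ I ⊆ X ∧ I.ncard = n}
  have hS : BddAbove S := by
    by_contra hS
    exact hn (h ▸ Nat.sSup_of_not_bddAbove hS)
  obtain ⟨I, hI, hIX, hIn⟩ : n ∈ S :=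
    h ▸ Nat.sSup_mem ⟨0, ∅, M.empty_indep, empty_subset _, ncard_empty α⟩ hS
  have hIfin : I.Finite := finite_of_ncard_ne_zero (hIn ▸ hn)
  refine ⟨I, hI.isBasis_of_forall_insert hIX fun e he => ?_, hIn⟩
  refine ⟨fun hins => ?_, insert_subset (hX he.1) hI.subset_ground⟩
  have hle := le_csSup hS ⟨_, hins, insert_subset he.1 hIX, rfl⟩
  rw [← rk, h, ncard_insert_of_notMem he.2 hIfin, hIn] at hle
  omega

section AffineGeometry

variable {N : Matroid α} {n : ℕ} {K : Type*} [Field K]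

lemma IsAffineGeom.indep_pair (hN : IsAffineGeom N n K) {x y : α} (hxy : x ≠ y) (hx : x ∈ N.E)
    (hy : y ∈ N.E) : N.Indep {x, y} := by
  obtain ⟨ψ, hψ, hψ1, hψinj, -⟩ := hN
  have hψx : ψ x ≠ 0 := fun h => by simpa [h] using hψ1 x hx
  rw [hψ.indep_pair_iff hxy hx hy, LinearIndependent.pair_iff' hψx]
  intro c hc
  have hc1 : c = 1 := by simpa [hψ1 x hx, hψ1 y hy] using congrFun hc 0
  exact hxy (hψinj hx hy (by rwa [hc1, one_smul] at hc))

lemma IsAffineGeom.exists_indep_three (hN : IsAffineGeom N 3 K) :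
    ∃ e : Fin 3 → α, Function.Injective e ∧ N.Indep (range e) := by
  obtain ⟨ψ, hψ, -, -, hψsurj⟩ := hN
  set v : Fin 3 → Fin 4 → K := ![![1, 0, 0, 0], ![1, 1, 0, 0], ![1, 0, 1, 0]]
  have hv : LinearIndependent K v := by
    rw [Fintype.linearIndependent_iff]
    intro c hc i
    have h0 := congrFun hc 0
    have h1 := congrFun hc 1
    have h2 := congrFun hc 2
    simp only [v, Finset.sum_apply, Pi.smul_apply, Matrix.cons_val', Matrix.cons_val_zero,
      Matrix.cons_val_fin_one, smul_eq_mul, Fin.sum_univ_three, mul_one, Matrix.cons_val_one,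
      Matrix.cons_val, Pi.zero_apply, mul_zero, zero_add, add_zero] at h0 h1 h2
    fin_cases i <;> simp_all
  choose e he hψe using fun i => hψsurj (v i) (by fin_cases i <;> rfl)
  have hinj : Function.Injective e := fun i j hij => hv.injective (by rw [← hψe, ← hψe, hij])
  refine ⟨e, hinj, (hψ _ (range_subset_iff.2 he)).2 ?_⟩
  rw [← LinearIndepOn, linearIndepOn_range_iff hinj]
  rwa [show ψ ∘ e = v from funext hψe]

open Submodule Module in
lemma IsAffineGeom.exists_notMem_span_pair (hN : IsAffineGeom N 3 K) {F V : Type*} [Field F]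
    [AddCommGroup V] [Module F V] {φ : α → V} (hrep : IsRepBy N F φ) (u v : V) :
    ∃ e ∈ N.E, φ e ∉ span F {u, v} := by
  obtain ⟨e, hinj, hind⟩ := hN.exists_indep_three
  have hli : LinearIndependent F (φ ∘ e) :=
    (linearIndepOn_range_iff hinj φ).1 ((hrep _ hind.subset_ground).1 hind)
  by_contra! hall
  have hle : span F (range (φ ∘ e)) ≤ span F {u, v} :=
    span_le.2 (range_subset_iff.2 fun i => hall _ (hind.subset_ground (mem_range_self i)))
  have : FiniteDimensional F (span F {u, v}) := .span_of_finite F (toFinite _)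
  have h3 : 3 ≤ finrank F (span F {u, v}) := by
    simpa [finrank_span_eq_card hli] using finrank_mono hle
  have h2 : finrank F (span F {u, v}) ≤ 2 := by
    classical
    have := (finrank_span_finset_le_card (R := F) ({u, v} : Finset V)).trans Finset.card_le_two
    rwa [Finset.coe_pair] at this
  omega

end AffineGeometry

section Extension

open Submodule

variable {F : Type*} [Field F] {K : Subfield F} {ι : Type*} {M : Matroid α} {g : α}
  {φ : α → ι → F} {a a' : ι → F} {ω : F}

lemma span_pair_eq_of_mem_closure (hrep : IsRepBy M F φ)
    (hK : ∀ e ∈ M.E \ {g}, ∀ j, φ e j ∈ K) (ha : ∀ j, a j ∈ K) (ha' : ∀ j, a' j ∈ K)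
    (haa' : LinearIndependent F ![a, a']) (hω : ω ∉ K) (hφg : φ g = a' - ω • a) {x y : α}
    (hxy : x ≠ y) (hx : x ∈ M.E \ {g}) (hy : y ∈ M.E \ {g}) (hind : M.Indep {x, y})
    (hg : g ∈ M.closure {x, y}) : span F {φ x, φ y} = span F {a, a'} := by
  rw [hrep.closure_eq_of_indep hind, image_pair] at hg
  have hgspan : a' - ω • a ∈ span F {φ x, φ y} := hφg ▸ hg.2
  obtain ⟨hax, hax'⟩ := mem_span_of_sub_smul_mem_span
    (by rintro s (rfl | rfl); exacts [hK x hx, hK y hy]) ha ha' hω hgspan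
  exact (span_pair_eq_of_subset ((hrep.indep_pair_iff hxy hx.1 hy.1).1 hind) haa' hax hax').symm

lemma line_eq_setOf_mem_span (hrep : IsRepBy M F φ)
    (hK : ∀ e ∈ M.E \ {g}, ∀ j, φ e j ∈ K) (ha : ∀ j, a j ∈ K) (ha' : ∀ j, a' j ∈ K)
    (haa' : LinearIndependent F ![a, a']) (hω : ω ∉ K) (hφg : φ g = a' - ω • a) {L : Set α}
    (hL : (del M {g}).IsFlat L) (hrk : rk (del M {g}) L = 2) (hgL : g ∈ M.closure L) :
    L = {x ∈ M.E \ {g} | φ x ∈ span F {a, a'}} := by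
  obtain ⟨I, hI, hIcard⟩ := exists_isBasis_ncard_eq_of_rk_eq two_ne_zero hL.subset_ground hrk
  obtain ⟨x, y, hxy, rfl⟩ := ncard_eq_two.1 hIcard
  have hIM : M.IsBasis {x, y} L := ((isBasis_restrict_iff sdiff_subset).1 hI).1
  have hspan := span_pair_eq_of_mem_closure hrep hK ha ha' haa' hω hφg hxy
    (hI.indep.subset_ground (mem_insert _ _)) (hI.indep.subset_ground (mem_insert_of_mem _ rfl))
    hIM.indep (hIM.closure_eq_closure ▸ hgL)
  have hrepN : IsRepBy (del M {g}) F φ := hrep.restrict sdiff_subset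
  rw [← hL.closure, ← hI.closure_eq_closure, hrepN.closure_eq_of_indep hI.indep, image_pair, hspan]
  rfl

lemma closure_pair_eq_of_notMem_span {n : ℕ} {K' : Type*} [Field K'] (hrep : IsRepBy M F φ)
    (hK : ∀ e ∈ M.E \ {g}, ∀ j, φ e j ∈ K) (ha : ∀ j, a j ∈ K) (ha' : ∀ j, a' j ∈ K)
    (haa' : LinearIndependent F ![a, a']) (hω : ω ∉ K) (hφg : φ g = a' - ω • a) (hg : g ∈ M.E)
    (hN : IsAffineGeom (del M {g}) n K') {e : α} (he : e ∈ M.E \ {g})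
    (heW : φ e ∉ span F {a, a'}) : M.closure {e, g} = {e, g} := by
  refine subset_antisymm (fun z hz => ?_) (M.subset_closure _ (pair_subset he.1 hg))
  by_contra hzeg
  simp only [mem_insert_iff, mem_singleton_iff, not_or] at hzeg
  obtain ⟨hze, hzg⟩ := hzeg
  have hz' : z ∈ M.E \ {g} := ⟨M.closure_subset_ground _ hz, hzg⟩
  have hind : M.Indep {z, e} := (hN.indep_pair hze hz' he).of_restrict
  have hgz : g ∈ M.closure {z, e} := by
    refine (closure_exchange ⟨?_, ?_⟩).1
    · rwa [pair_comm] at hz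
    · simpa [hze] using hind.notMem_closure_sdiff_of_mem (mem_insert z {e})
  have hspan := span_pair_eq_of_mem_closure hrep hK ha ha' haa' hω hφg hze hz' he hind hgz
  exact heW (hspan ▸ subset_span (mem_insert_of_mem _ rfl))

end Extension

theorem stmt17_general {α : Type*} {F : Type*} [Field F] (K : Subfield F)
    (M : Matroid α) (g : α) (hg : g ∈ M.E)
    (φ : α → (Fin 4 → F)) (hrep : IsRepBy M F φ)
    (hKentries : ∀ e ∈ M.E \ {g}, ∀ j, φ e j ∈ K)
    (hAG : IsAffineGeom (del M {g}) 3 K)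
    (a a' : Fin 4 → F) (ha : ∀ j, a j ∈ K) (ha' : ∀ j, a' j ∈ K)
    (h0 : a ≠ 0) (hpar : ∀ c : F, a' ≠ c • a)
    (ω : F) (hω : ω ∉ K) (hφg : φ g = a' - ω • a) :
    (∀ L₁ L₂ : Set α, (del M {g}).IsFlat L₁ → rk (del M {g}) L₁ = 2 →
      (del M {g}).IsFlat L₂ → rk (del M {g}) L₂ = 2 →
      g ∈ M.closure L₁ → g ∈ M.closure L₂ → L₁ = L₂) ∧
    ∃ e ∈ M.E \ {g}, M.closure {e, g} = {e, g} := by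
  have haa' : LinearIndependent F ![a, a'] :=
    (LinearIndependent.pair_iff' h0).2 fun c h => hpar c h.symm
  refine ⟨fun L₁ L₂ hL₁ hrk₁ hL₂ hrk₂ hgL₁ hgL₂ => ?_, ?_⟩
  · rw [line_eq_setOf_mem_span hrep hKentries ha ha' haa' hω hφg hL₁ hrk₁ hgL₁,
      line_eq_setOf_mem_span hrep hKentries ha ha' haa' hω hφg hL₂ hrk₂ hgL₂]
  · obtain ⟨e, he, heW⟩ := hAG.exists_notMem_span_pair (hrep.restrict sdiff_subset) a a'
    exact ⟨e, he, closure_pair_eq_of_notMem_span hrep hKentries ha ha' haa' hω hφg hg hAG he heW⟩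

/-- Extending a `GF(q)`-representation of `AG(3,q)` by the column `α' - ω·α`
(with `α,α'` nonzero non-parallel `GF(q)`-columns and `ω ∉ GF(q)`): the new element
`g` lies in the closure of at most one line, so some element `e` satisfies
`cl({e,g}) = {e,g}`. -/
theorem stmt17 {α : Type*} (q : ℕ) {F : Type*} [Field F] (K : Subfield F)
    [Fintype K] (hq : Fintype.card K = q)
    (M : Matroid α) (g : α) (hg : g ∈ M.E)
    (φ : α → (Fin 4 → F)) (hrep : IsRepBy M F φ)
    (hKentries : ∀ e ∈ M.E \ {g}, ∀ j, φ e j ∈ K)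
    (hAG : IsAffineGeom (del M {g}) 3 K)
    (a a' : Fin 4 → F) (ha : ∀ j, a j ∈ K) (ha' : ∀ j, a' j ∈ K)
    (h0 : a ≠ 0) (h0' : a' ≠ 0) (hpar : ∀ c : F, a' ≠ c • a)
    (ω : F) (hω : ω ∉ K) (hφg : φ g = a' - ω • a) :
    (∀ L₁ L₂ : Set α, (del M {g}).IsFlat L₁ → rk (del M {g}) L₁ = 2 →
      (del M {g}).IsFlat L₂ → rk (del M {g}) L₂ = 2 →
      g ∈ M.closure L₁ → g ∈ M.closure L₂ → L₁ = L₂) ∧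
    ∃ e ∈ M.E \ {g}, M.closure {e, g} = {e, g} :=
  stmt17_general K M g hg φ hrep hKentries hAG a a' ha ha' h0 hpar ω hω hφg

end Paper
end
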